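/- arXiv:2112.10331 — 3 statements merged into one kernel-verified Lean document; each statement's English description precedes it below -/
import Mathlib

section
/- Let p be a prime, G a finite abelian p-group, and C_p the cyclic group of order p. The number of subgroups of G × C_p equals 2·s(G) + (p−1)·e(G), where s(G) is the number of subgroups of G and e(G) is the number of pairs (K, N) of subgroups of G with N ≤ K and [K : N] = p. -/
open Subgroup

section Aux
variable {p : ℕ} [Fact p.Prime] {G : Type*} [CommGroup G] [Finite G]

local notation "C" => Multiplicative (ZMod p)

lemma neZero_p : NeZero p := ⟨(Fact.out : p.Prime).ne_zero⟩

lemma card_C : Nat.card C = p := by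
  haveI : NeZero p := neZero_p
  simp [Nat.card_eq_fintype_card, ZMod.card]

/-- Subgroups containing `1 × C` correspond to subgroups of `G`. -/
noncomputable def e1 :
    {H : Subgroup (G × C) // (⊥ : Subgroup G).prod ⊤ ≤ H} ≃ Subgroup G where
  toFun H := H.1.comap (MonoidHom.inl G C)
  invFun K := ⟨K.prod ⊤, by
    rintro ⟨g, c⟩ ⟨hg, -⟩
    have : g = 1 := by simpa using hg
    exact ⟨this ▸ K.one_mem, trivial⟩⟩
  left_inv := by
    rintro ⟨H, hH⟩
    ext ⟨g, c⟩
    simp only [Subgroup.mem_prod, Subgroup.mem_comap, MonoidHom.inl_apply]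
    constructor
    · rintro ⟨h1, -⟩
      have h2 : ((1 : G), c) ∈ H := hH ⟨rfl, trivial⟩
      simpa using H.mul_mem h1 h2
    · intro h
      have h2 : ((1 : G), c⁻¹) ∈ H := hH ⟨rfl, trivial⟩
      refine ⟨?_, trivial⟩
      simpa using H.mul_mem h h2
  right_inv K := by
    ext g
    simp [Subgroup.mem_comap, Subgroup.mem_prod]

/-- Subgroups contained in `G × 1` correspond to subgroups of `G`. -/
noncomputable def e2 :
    {H : Subgroup (G × C) // H ≤ (⊤ : Subgroup G).prod ⊥} ≃ Subgroup G where
  toFun H := H.1.comap (MonoidHom.inl G C)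
  invFun K := ⟨K.prod ⊥, by rintro ⟨g, c⟩ ⟨-, hc⟩; exact ⟨trivial, hc⟩⟩
  left_inv := by
    rintro ⟨H, hH⟩
    ext ⟨g, c⟩
    simp only [Subgroup.mem_prod, Subgroup.mem_comap, MonoidHom.inl_apply, Subgroup.mem_bot]
    constructor
    · rintro ⟨h1, rfl⟩; exact h1
    · intro h
      have : c = 1 := (hH h).2
      subst this
      exact ⟨h, rfl⟩
  right_inv K := by
    ext g
    simp [Subgroup.mem_comap, Subgroup.mem_prod]

end Aux

section Graph
variable {p : ℕ} [Fact p.Prime] {G : Type*} [CommGroup G] [Finite G]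

local notation "C" => Multiplicative (ZMod p)

lemma exists_graph (H : Subgroup (G × C)) (K : Subgroup G)
    (hK : Subgroup.map (MonoidHom.fst G C) H = K) (k : K) : ∃ c : C, ((k : G), c) ∈ H := by
  have : (k : G) ∈ Subgroup.map (MonoidHom.fst G C) H := hK ▸ k.2
  obtain ⟨x, hx, he⟩ := this
  exact ⟨x.2, by rwa [show ((k : G), x.2) = x from Prod.ext he.symm rfl]⟩

/-- The value of the graph function. -/
noncomputable def hfFun (H : Subgroup (G × C)) (K : Subgroup G)
    (hK : Subgroup.map (MonoidHom.fst G C) H = K) (k : K) : C :=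
  (exists_graph H K hK k).choose

lemma hf_mem (H : Subgroup (G × C)) (K : Subgroup G)
    (hK : Subgroup.map (MonoidHom.fst G C) H = K) (k : K) :
    ((k : G), hfFun H K hK k) ∈ H := (exists_graph H K hK k).choose_spec

lemma hf_eq (H : Subgroup (G × C)) (h1 : ∀ c : C, ((1 : G), c) ∈ H → c = 1) (K : Subgroup G)
    (hK : Subgroup.map (MonoidHom.fst G C) H = K) {k : K} {c : C}
    (hc : ((k : G), c) ∈ H) : hfFun H K hK k = c := by
  have h := H.mul_mem (H.inv_mem hc) (hf_mem H K hK k)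
  have h2 : ((1 : G), c⁻¹ * hfFun H K hK k) ∈ H := by
    simpa [Prod.ext_iff] using h
  have := h1 _ h2
  rwa [inv_mul_eq_one, eq_comm] at this

/-- The graph homomorphism `K →* C` extracted from `H`. -/
noncomputable def hf (H : Subgroup (G × C)) (h1 : ∀ c : C, ((1 : G), c) ∈ H → c = 1)
    (K : Subgroup G) (hK : Subgroup.map (MonoidHom.fst G C) H = K) : K →* C where
  toFun := hfFun H K hK
  map_one' := hf_eq H h1 K hK (by exact H.one_mem)
  map_mul' := fun k k' => hf_eq H h1 K hK
    (by simpa using H.mul_mem (hf_mem H K hK k) (hf_mem H K hK k'))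

lemma hf_ker (H : Subgroup (G × C)) (h1 : ∀ c : C, ((1 : G), c) ∈ H → c = 1)
    (K : Subgroup G) (hK : Subgroup.map (MonoidHom.fst G C) H = K)
    {N : Subgroup G} (hN : H.comap (MonoidHom.inl G C) = N) :
    (hf H h1 K hK).ker = N.subgroupOf K := by
  ext k
  simp only [MonoidHom.mem_ker, Subgroup.mem_subgroupOf, ← hN, Subgroup.mem_comap,
    MonoidHom.inl_apply]
  constructor
  · intro h
    have hm := hf_mem H K hK k
    rw [show hf H h1 K hK k = hfFun H K hK k from rfl] at h
    rwa [h] at hm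
  · intro h
    exact hf_eq H h1 K hK h

lemma hf_surjective (H : Subgroup (G × C)) (h1 : ∀ c : C, ((1 : G), c) ∈ H → c = 1)
    (K : Subgroup G) (hK : Subgroup.map (MonoidHom.fst G C) H = K)
    (h2 : Subgroup.map (MonoidHom.snd G C) H = ⊤) :
    Function.Surjective (hf H h1 K hK) := by
  intro c
  have : c ∈ Subgroup.map (MonoidHom.snd G C) H := h2 ▸ Subgroup.mem_top c
  obtain ⟨x, hx, he⟩ := this
  have hk : x.1 ∈ K := hK ▸ ⟨x, hx, rfl⟩
  exact ⟨⟨x.1, hk⟩, hf_eq H h1 K hK (by rwa [show ((x.1 : G), c) = x from Prod.ext rfl he.symm])⟩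


/-- The subgroup of `G × C` which is the graph of `f : K →* C`. -/
def Hof (K : Subgroup G) (f : K →* C) : Subgroup (G × C) := (K.subtype.prod f).range

lemma mem_Hof {K : Subgroup G} {f : K →* C} {x : G × C} :
    x ∈ Hof K f ↔ ∃ k : K, ((k : G), f k) = x := Iff.rfl

lemma Hof_h1 (K : Subgroup G) (f : K →* C) :
    ∀ c : C, ((1 : G), c) ∈ Hof K f → c = 1 := by
  rintro c ⟨k, hk⟩
  obtain ⟨hk1, hk2⟩ := Prod.mk.injEq .. ▸ hk
  have : k = 1 := Subtype.ext (by simpa using hk1)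
  rw [← hk2, this, map_one]

lemma Hof_map_fst (K : Subgroup G) (f : K →* C) :
    Subgroup.map (MonoidHom.fst G C) (Hof K f) = K := by
  rw [Hof, ← MonoidHom.range_comp, MonoidHom.fst_comp_prod, Subgroup.range_subtype]

lemma Hof_comap_inl {K N : Subgroup G} (hle : N ≤ K) {f : K →* C}
    (hker : f.ker = N.subgroupOf K) :
    (Hof K f).comap (MonoidHom.inl G C) = N := by
  ext g
  simp only [Subgroup.mem_comap, MonoidHom.inl_apply, mem_Hof]
  constructor
  · rintro ⟨k, hk⟩
    obtain ⟨hk1, hk2⟩ := Prod.mk.injEq .. ▸ hk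
    have : k ∈ f.ker := hk2
    rw [hker, Subgroup.mem_subgroupOf] at this
    rwa [hk1] at this
  · intro hg
    refine ⟨⟨g, hle hg⟩, ?_⟩
    have : (⟨g, hle hg⟩ : K) ∈ f.ker := by rw [hker, Subgroup.mem_subgroupOf]; exact hg
    rw [MonoidHom.mem_ker] at this
    rw [this]

lemma Hof_map_snd {K : Subgroup G} {f : K →* C} (hsurj : Function.Surjective f) :
    Subgroup.map (MonoidHom.snd G C) (Hof K f) = ⊤ := by
  rw [Hof, ← MonoidHom.range_comp, MonoidHom.snd_comp_prod]
  exact MonoidHom.range_eq_top.mpr hsurj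

lemma f_surj_of_relindex {K N : Subgroup G} {f : K →* C} (hker : f.ker = N.subgroupOf K)
    (hrel : N.relIndex K = p) : Function.Surjective f := by
  haveI : NeZero p := neZero_p
  have hidx : f.ker.index = p := by rw [hker]; exact hrel
  have hcard : Nat.card f.range = p := by
    rw [← Nat.card_congr (QuotientGroup.quotientKerEquivRange f).toEquiv,
      ← Subgroup.index_eq_card, hidx]
  rw [← MonoidHom.range_eq_top, ← Subgroup.card_eq_iff_eq_top, hcard, card_C]

lemma relindex_of_H (H : Subgroup (G × C)) (h1 : ∀ c : C, ((1 : G), c) ∈ H → c = 1)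
    (K : Subgroup G) (hK : Subgroup.map (MonoidHom.fst G C) H = K)
    {N : Subgroup G} (hN : H.comap (MonoidHom.inl G C) = N)
    (h2 : Subgroup.map (MonoidHom.snd G C) H = ⊤) :
    N.relIndex K = p := by
  have hker := hf_ker H h1 K hK hN
  have hrange : (hf H h1 K hK).range = ⊤ :=
    MonoidHom.range_eq_top.mpr (hf_surjective H h1 K hK h2)
  have : N.relIndex K = (hf H h1 K hK).ker.index := by rw [hker]; rfl
  rw [this, Subgroup.index_eq_card,
    Nat.card_congr (QuotientGroup.quotientKerEquivRange _).toEquiv, hrange]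
  exact (Nat.card_congr (Equiv.subtypeUnivEquiv fun x => Subgroup.mem_top x)).trans
    (card_C (p := p))

lemma le_of_H (H : Subgroup (G × C))
    (K : Subgroup G) (hK : Subgroup.map (MonoidHom.fst G C) H = K)
    {N : Subgroup G} (hN : H.comap (MonoidHom.inl G C) = N) : N ≤ K := by
  intro g hg
  rw [← hN, Subgroup.mem_comap] at hg
  rw [← hK]
  exact ⟨((g : G), (1 : C)), hg, rfl⟩

lemma Hof_hf (H : Subgroup (G × C)) (h1 : ∀ c : C, ((1 : G), c) ∈ H → c = 1)
    (K : Subgroup G) (hK : Subgroup.map (MonoidHom.fst G C) H = K) :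
    Hof K (hf H h1 K hK) = H := by
  ext x
  rw [mem_Hof]
  constructor
  · rintro ⟨k, hk⟩
    rw [← hk]
    exact hf_mem H K hK k
  · intro hx
    have hk : x.1 ∈ K := hK ▸ ⟨x, hx, rfl⟩
    refine ⟨⟨x.1, hk⟩, ?_⟩
    have : hfFun H K hK ⟨x.1, hk⟩ = x.2 := hf_eq H h1 K hK (by rwa [show ((x.1 : G), x.2) = x from rfl])
    exact Prod.ext rfl this

lemma hf_Hof (K : Subgroup G) (f : K →* C)
    (hK : Subgroup.map (MonoidHom.fst G C) (Hof K f) = K) :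
    hf (Hof K f) (Hof_h1 K f) K hK = f := by
  ext k
  exact hf_eq (Hof K f) (Hof_h1 K f) K hK ⟨k, rfl⟩

end Graph

section HomCount
variable {p : ℕ} [Fact p.Prime]

local notation "C" => Multiplicative (ZMod p)

/-- `AddMonoidHom (ZMod p) (ZMod p)` is equivalent to `ZMod p`. -/
def zmodHomEquiv : (ZMod p →+ ZMod p) ≃ ZMod p where
  toFun f := f 1
  invFun a := AddMonoidHom.mulRight a
  left_inv f := by
    haveI : NeZero p := neZero_p
    ext x
    show x * f 1 = f x
    conv_rhs => rw [← ZMod.natCast_rightInverse x]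
    rw [show ((x.val : ZMod p)) = x.val • (1 : ZMod p) by simp [nsmul_eq_mul],
      map_nsmul, nsmul_eq_mul, ZMod.natCast_rightInverse x]
  right_inv a := by simp [AddMonoidHom.mulRight]

lemma card_hom_C (Q : Type*) [CommGroup Q] [Finite Q] (hQ : Nat.card Q = p) :
    Nat.card (Q →* C) = p := by
  haveI : NeZero p := neZero_p
  let e1 : Q ≃* C := mulEquivOfPrimeCardEq hQ card_C
  let e2 : (Q →* C) ≃ (C →* C) := MulEquiv.monoidHomCongrLeftEquiv e1
  let e3 : (C →* C) ≃ (ZMod p →+ ZMod p) := MonoidHom.toAdditive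
  rw [Nat.card_congr ((e2.trans e3).trans zmodHomEquiv), Nat.card_zmod]


lemma nat_card_subtype_ne {α : Type*} [Finite α] (a : α) :
    Nat.card {x : α // x ≠ a} = Nat.card α - 1 := by
  classical
  haveI := Fintype.ofFinite α
  rw [Nat.card_eq_fintype_card, Nat.card_eq_fintype_card]
  have h1 : Fintype.card {x : α // ¬ x = a} = Fintype.card α - Fintype.card {x : α // x = a} :=
    Fintype.card_subtype_compl _
  have h2 : Fintype.card {x : α // x = a} = 1 := Fintype.card_subtype_eq a
  calc Fintype.card {x : α // x ≠ a} = Fintype.card α - Fintype.card {x : α // x = a} := h1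
    _ = Fintype.card α - 1 := by rw [h2]

lemma ker_eq_bot_iff_ne_one {Q : Type*} [CommGroup Q] [Finite Q] (hQ : Nat.card Q = p)
    (φ : Q →* C) : φ.ker = ⊥ ↔ φ ≠ 1 := by
  haveI : Fact (Nat.card Q).Prime := ⟨hQ ▸ (Fact.out : p.Prime)⟩
  haveI hnt : Nontrivial Q := by
    rw [← Finite.one_lt_card_iff_nontrivial, hQ]
    exact (Fact.out : p.Prime).one_lt
  constructor
  · rintro hb rfl
    rw [show (1 : Q →* C).ker = ⊤ by ext q; simp [MonoidHom.mem_ker]] at hb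
    exact absurd hb top_ne_bot
  · intro hne
    rcases φ.ker.eq_bot_or_eq_top_of_prime_card with h | h
    · exact h
    · refine absurd (MonoidHom.ext fun q => ?_) hne
      have : q ∈ φ.ker := h ▸ Subgroup.mem_top q
      simpa [MonoidHom.mem_ker] using this

lemma card_ker_set {K : Type*} [CommGroup K] [Finite K] (N' : Subgroup K)
    (hidx : N'.index = p) :
    Nat.card {f : K →* C // f.ker = N'} = p - 1 := by
  classical
  have hQ : Nat.card (K ⧸ N') = p := by rw [← Subgroup.index_eq_card]; exact hidx
  let e : {f : K →* C // f.ker = N'} ≃ {φ : (K ⧸ N') →* C // φ.ker = ⊥} :=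
    { toFun := fun f => ⟨QuotientGroup.lift N' f.1 (le_of_eq f.2.symm), by
        ext q
        induction q using QuotientGroup.induction_on with
        | H k =>
          simp only [MonoidHom.mem_ker, QuotientGroup.lift_mk, Subgroup.mem_bot,
            QuotientGroup.eq_one_iff]
          rw [← MonoidHom.mem_ker, f.2]⟩
      invFun := fun φ => ⟨φ.1.comp (QuotientGroup.mk' N'), by
        rw [← MonoidHom.comap_ker, φ.2, MonoidHom.comap_bot, QuotientGroup.ker_mk']⟩
      left_inv := fun f => Subtype.ext (MonoidHom.ext fun k => rfl)
      right_inv := fun φ => Subtype.ext (MonoidHom.ext fun q => by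
        induction q using QuotientGroup.induction_on with
        | H k => rfl) }
  haveI : Finite ((K ⧸ N') →* C) :=
    Finite.of_injective (fun f => (f : (K ⧸ N') → C)) DFunLike.coe_injective
  rw [Nat.card_congr e,
    Nat.card_congr (Equiv.subtypeEquivRight fun φ => ker_eq_bot_iff_ne_one hQ φ),
    nat_card_subtype_ne, card_hom_C _ hQ]

end HomCount

section Count
variable {p : ℕ} [Fact p.Prime] {G : Type*} [CommGroup G] [Finite G]

local notation "C" => Multiplicative (ZMod p)

/-- The condition defining "graph" subgroups. -/
def S3Cond (H : Subgroup (G × C)) : Prop :=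
  (∀ c : C, ((1 : G), c) ∈ H → c = 1) ∧ Subgroup.map (MonoidHom.snd G C) H = ⊤

/-- The type of pairs `(K, N)` with `N ≤ K` of relative index `p`. -/
def PairsT (p : ℕ) (G : Type*) [CommGroup G] : Type _ :=
  {KN : Subgroup G × Subgroup G // KN.2 ≤ KN.1 ∧ KN.2.relIndex KN.1 = p}

/-- The Goursat invariant of a graph subgroup. -/
noncomputable def Psi (H : {H : Subgroup (G × C) // S3Cond H}) : PairsT p G :=
  ⟨(Subgroup.map (MonoidHom.fst G C) H.1, H.1.comap (MonoidHom.inl G C)),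
    le_of_H H.1 _ rfl rfl, relindex_of_H H.1 H.2.1 _ rfl rfl H.2.2⟩

noncomputable def fiberEquiv (kn : PairsT p G) :
    {H : {H : Subgroup (G × C) // S3Cond H} // Psi H = kn} ≃
      {f : kn.1.1 →* C // f.ker = kn.1.2.subgroupOf kn.1.1} where
  toFun x :=
    ⟨hf x.1.1 x.1.2.1 kn.1.1 (congrArg (fun y : PairsT p G => y.1.1) x.2),
     hf_ker x.1.1 x.1.2.1 kn.1.1 _ (congrArg (fun y : PairsT p G => y.1.2) x.2)⟩
  invFun f :=
    ⟨⟨Hof kn.1.1 f.1, Hof_h1 _ _, Hof_map_snd (f_surj_of_relindex f.2 kn.2.2)⟩,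
      Subtype.ext (Prod.ext (Hof_map_fst _ _) (Hof_comap_inl kn.2.1 f.2))⟩
  left_inv x := Subtype.ext (Subtype.ext (Hof_hf x.1.1 x.1.2.1 kn.1.1 _))
  right_inv f := Subtype.ext (hf_Hof kn.1.1 f.1 _)

lemma nat_card_sigma {ι : Type*} [Finite ι] (β : ι → Type*) [∀ i, Finite (β i)] (m : ℕ)
    (h : ∀ i, Nat.card (β i) = m) : Nat.card (Σ i, β i) = m * Nat.card ι := by
  classical
  haveI := Fintype.ofFinite ι
  haveI := fun i => Fintype.ofFinite (β i)
  rw [Nat.card_eq_fintype_card, Nat.card_eq_fintype_card, Fintype.card_sigma]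
  calc ∑ i, Fintype.card (β i) = ∑ _i : ι, m :=
        Finset.sum_congr rfl fun i _ => by rw [← Nat.card_eq_fintype_card, h i]
    _ = Fintype.card ι * m := by simp [Finset.sum_const, Finset.card_univ]
    _ = m * Fintype.card ι := mul_comm _ _

lemma nat_card_partition {α : Type*} [Finite α] (P : α → Prop) :
    Nat.card α = Nat.card {x // P x} + Nat.card {x // ¬ P x} := by
  classical
  rw [← Nat.card_sum]
  exact Nat.card_congr (Equiv.sumCompl P).symm

lemma card_S3 [Finite (Subgroup (G × C))] [Finite (PairsT p G)] :
    Nat.card {H : Subgroup (G × C) // S3Cond H} = (p - 1) * Nat.card (PairsT p G) := by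
  classical
  haveI : ∀ kn : PairsT p G, Finite (kn.1.1 →* C) := fun kn =>
    Finite.of_injective (fun f => (f : kn.1.1 → C)) DFunLike.coe_injective
  rw [← Nat.card_congr (Equiv.sigmaFiberEquiv (Psi (p := p) (G := G))),
    Nat.card_congr (Equiv.sigmaCongrRight (fiberEquiv (p := p) (G := G)))]
  exact nat_card_sigma _ (p - 1) fun kn => card_ker_set _ kn.2.2

end Count

section Tri
variable {p : ℕ} [Fact p.Prime] {G : Type*} [CommGroup G] [Finite G]

local notation "C" => Multiplicative (ZMod p)

lemma nontrivial_C : Nontrivial C := by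
  haveI : NeZero p := neZero_p
  rw [← Finite.one_lt_card_iff_nontrivial, card_C]
  exact (Fact.out : p.Prime).one_lt

lemma cond3_of_not {H : Subgroup (G × C)}
    (hP1 : ¬ (⊥ : Subgroup G).prod (⊤ : Subgroup C) ≤ H)
    (hP2 : ¬ H ≤ (⊤ : Subgroup G).prod (⊥ : Subgroup C)) : S3Cond H := by
  haveI : NeZero p := neZero_p
  constructor
  · intro c hc
    by_contra hc1
    have hz : Subgroup.zpowers c = ⊤ := zpowers_eq_top_of_prime_card (card_C (p := p)) hc1
    refine hP1 ?_
    rintro ⟨g, c'⟩ ⟨hg, -⟩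
    have hg1 : g = 1 := by simpa using hg
    have : c' ∈ Subgroup.zpowers c := hz ▸ Subgroup.mem_top c'
    obtain ⟨k, hk⟩ := this
    have := H.zpow_mem hc k
    subst hg1
    simpa [Prod.ext_iff, ← hk] using this
  · haveI : Fact (Nat.card C).Prime := ⟨by rw [card_C (p := p)]; exact (Fact.out : p.Prime)⟩
    rcases (Subgroup.map (MonoidHom.snd G C) H).eq_bot_or_eq_top_of_prime_card with hb | ht
    · exact absurd (fun x hx => by
        refine ⟨trivial, ?_⟩
        have : x.2 ∈ Subgroup.map (MonoidHom.snd G C) H := ⟨x, hx, rfl⟩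
        rw [hb] at this
        exact this) hP2
    · exact ht

lemma notP1_of_cond3 {H : Subgroup (G × C)} (h : S3Cond H) :
    ¬ (⊥ : Subgroup G).prod (⊤ : Subgroup C) ≤ H := by
  haveI := nontrivial_C (p := p)
  intro hle
  obtain ⟨c, hc⟩ := exists_ne (1 : C)
  exact hc (h.1 c (hle ⟨Subgroup.mem_bot.mpr rfl, Subgroup.mem_top _⟩))

lemma notP2_of_cond3 {H : Subgroup (G × C)} (h : S3Cond H) :
    ¬ H ≤ (⊤ : Subgroup G).prod (⊥ : Subgroup C) := by
  haveI := nontrivial_C (p := p)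
  intro hle
  have hmap : Subgroup.map (MonoidHom.snd G C) H = ⊥ := by
    rw [eq_bot_iff]
    rintro c ⟨x, hx, rfl⟩
    exact (hle hx).2
  rw [h.2] at hmap
  exact absurd hmap top_ne_bot

lemma notP1_of_P2 {H : Subgroup (G × C)} (h : H ≤ (⊤ : Subgroup G).prod (⊥ : Subgroup C)) :
    ¬ (⊥ : Subgroup G).prod (⊤ : Subgroup C) ≤ H := by
  haveI := nontrivial_C (p := p)
  intro hle
  obtain ⟨c, hc⟩ := exists_ne (1 : C)
  have hm : ((1 : G), c) ∈ (⊥ : Subgroup G).prod (⊤ : Subgroup C) :=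
    ⟨Subgroup.mem_bot.mpr rfl, Subgroup.mem_top _⟩
  exact hc (Subgroup.mem_bot.mp (Subgroup.mem_prod.mp (h (hle hm))).2)

end Tri



/-- For a finite abelian `p`-group `G`, the number of subgroups of `G × C_p` equals
`2·s(G) + (p−1)·e(G)`, where `s(G)` is the number of subgroups of `G` and `e(G)` is
the number of pairs `(K, N)` of subgroups of `G` with `N ≤ K` of index `p`. -/
theorem card_subgroups_prod_Cp (p : ℕ) [Fact p.Prime] (G : Type*) [CommGroup G]
    [Finite G] (hG : IsPGroup p G) :
    Nat.card (Subgroup (G × Multiplicative (ZMod p))) =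
      2 * Nat.card (Subgroup G) +
        (p - 1) * Nat.card {KN : Subgroup G × Subgroup G //
          KN.2 ≤ KN.1 ∧ KN.2.relIndex KN.1 = p} := by
  classical
  haveI : NeZero p := neZero_p
  set C' := Multiplicative (ZMod p)
  haveI : Finite (Subgroup (G × C')) :=
    Finite.of_injective (fun H => (H : Set (G × C'))) SetLike.coe_injective
  haveI : Finite (Subgroup G) :=
    Finite.of_injective (fun H => (H : Set G)) SetLike.coe_injective
  haveI : Finite (PairsT p G) := by unfold PairsT; infer_instance
  set P1 : Subgroup (G × C') → Prop := fun H => (⊥ : Subgroup G).prod (⊤ : Subgroup C') ≤ H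
  set P2 : Subgroup (G × C') → Prop := fun H => H ≤ (⊤ : Subgroup G).prod (⊥ : Subgroup C')
  have step1 := nat_card_partition (α := Subgroup (G × C')) P1
  have step2 := nat_card_partition (α := {H : Subgroup (G × C') // ¬ P1 H}) fun H => P2 H.1
  have flat1 : Nat.card {H : {H : Subgroup (G × C') // ¬ P1 H} // P2 H.1} =
      Nat.card {H : Subgroup (G × C') // ¬ P1 H ∧ P2 H} :=
    Nat.card_congr (Equiv.subtypeSubtypeEquivSubtypeInter _ _)
  have flat2 : Nat.card {H : {H : Subgroup (G × C') // ¬ P1 H} // ¬ P2 H.1} =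
      Nat.card {H : Subgroup (G × C') // ¬ P1 H ∧ ¬ P2 H} :=
    Nat.card_congr (Equiv.subtypeSubtypeEquivSubtypeInter (fun H => ¬ P1 H) (fun H => ¬ P2 H))
  have hA : Nat.card {H : Subgroup (G × C') // P1 H} = Nat.card (Subgroup G) :=
    Nat.card_congr e1
  have hB : Nat.card {H : Subgroup (G × C') // ¬ P1 H ∧ P2 H} = Nat.card (Subgroup G) := by
    rw [Nat.card_congr (Equiv.subtypeEquivRight (q := fun H => P2 H)
      fun H => ⟨And.right, fun h => ⟨notP1_of_P2 h, h⟩⟩)]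
    exact Nat.card_congr e2
  have hC : Nat.card {H : Subgroup (G × C') // ¬ P1 H ∧ ¬ P2 H} =
      (p - 1) * Nat.card (PairsT p G) := by
    rw [Nat.card_congr (Equiv.subtypeEquivRight (q := fun H => S3Cond H)
      fun H => ⟨fun h => cond3_of_not h.1 h.2,
        fun h => ⟨notP1_of_cond3 h, notP2_of_cond3 h⟩⟩)]
    exact card_S3
  have : Nat.card (PairsT p G) = Nat.card {KN : Subgroup G × Subgroup G //
      KN.2 ≤ KN.1 ∧ KN.2.relIndex KN.1 = p} := rfl
  rw [step1, step2, flat1, flat2, hA, hB, hC, this] at *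
  omega
end

section
/- Let p be a prime and ν ≥ 1 an integer, let ξ be a primitive p^ν-th root of unity and ζ = ξ^{p^{ν−1}} a primitive p-th root of unity. Let a generator of C_p act on W = ℚ(ξ) by multiplication by ζ. Then W ⊕ ℚ^{p^{ν−1}} (trivial C_p-action on the second summand) is isomorphic as a ℚ[C_p]-module to ℚ[C_p]^{p^{ν−1}}. -/
open Polynomial IntermediateField

set_option maxHeartbeats 2000000
set_option synthInstance.maxHeartbeats 400000


/-- Let `ξ` be a primitive `p^ν`-th root of unity (`ν ≥ 1`) and `ζ = ξ^{p^{ν−1}}`.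
Letting the generator of `C_p` act on `W = ℚ(ξ)` by multiplication by `ζ` and
trivially on `ℚ^{p^{ν−1}}`, the `ℚ[C_p]`-module `W ⊕ ℚ^{p^{ν−1}}` is isomorphic to
the free module `ℚ[C_p]^{p^{ν−1}}`. -/
theorem cyclotomic_plus_trivial_iso_free (p : ℕ) [Fact p.Prime] (ν : ℕ) (hν : 1 ≤ ν)
    (q : ℕ+) (hq : (q : ℕ) = p ^ ν)
    (K : Type*) [Field K] [Algebra ℚ K] [IsCyclotomicExtension {(q : ℕ)} ℚ K]
    (ξ : K) (hξ : IsPrimitiveRoot ξ (p ^ ν)) :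
    ∃ e : (K × (Fin (p ^ (ν - 1)) → ℚ)) ≃ₗ[ℚ]
        (Fin (p ^ (ν - 1)) → (Multiplicative (ZMod p) →₀ ℚ)),
      ∀ (g : Multiplicative (ZMod p)) (v : K × (Fin (p ^ (ν - 1)) → ℚ)),
        e ((ξ ^ (p ^ (ν - 1))) ^ (Multiplicative.toAdd g).val * v.1, v.2) =
          fun i => MonoidAlgebra.coeffLinearEquiv ℚ (Representation.ofMulAction ℚ (Multiplicative (ZMod p))
            (Multiplicative (ZMod p)) g ((MonoidAlgebra.coeffLinearEquiv ℚ).symm (e v i))) := by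
  classical
  have hp : p.Prime := Fact.out
  have hpn : p ^ ν = p ^ (ν - 1) * p := by rw [← pow_succ, Nat.sub_add_cancel hν]
  have hζ : IsPrimitiveRoot (ξ ^ (p ^ (ν - 1))) p :=
    hξ.pow (pow_pos hp.pos ν) hpn
  set n := p ^ (ν - 1) with hn
  set ζ : K := ξ ^ n with hzdef
  have hfinK : FiniteDimensional ℚ K := IsCyclotomicExtension.finite {(q : ℕ)} ℚ K
  have : CharZero K := charZero_of_injective_algebraMap (algebraMap ℚ K).injective
  have hint : IsIntegral ℚ ζ := IsIntegral.of_finite ℚ ζ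
  have hminpoly : cyclotomic p ℚ = minpoly ℚ ζ := by
    have h := cyclotomic_eq_minpoly_rat hζ hp.pos
    convert h using 2
    exact Subsingleton.elim _ _
  have hfrK : Module.finrank ℚ K = n * (p - 1) := by
    have := IsCyclotomicExtension.finrank (n := (q : ℕ)) K (cyclotomic.irreducible_rat q.pos)
    rw [this, hq, Nat.totient_prime_pow hp (by omega)]
  set L : IntermediateField ℚ K := ℚ⟮ζ⟯ with hL
  have hfrL : Module.finrank ℚ L = p - 1 := by
    rw [hL, adjoin.finrank hint, ← hminpoly, natDegree_cyclotomic, Nat.totient_prime hp]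
  have hfrLK : Module.finrank L K = n := by
    have h1 := Module.finrank_mul_finrank ℚ L K
    rw [hfrL, hfrK] at h1
    have hppos : 0 < p - 1 := by have := hp.two_le; omega
    exact Nat.eq_of_mul_eq_mul_left hppos (h1.trans (mul_comm n (p - 1)))
  letI : Algebra ℚ (↥L) := IntermediateField.algebra' L
  letI : SMul ℚ (↥L) := Algebra.toSMul
  letI : Module ℚ (↥L) := Algebra.toModule
  letI : IsScalarTower ℚ (↥L) K := IsScalarTower.of_algebraMap_eq fun c => rfl
  -- the primitive root inside L
  have : NeZero p := ⟨hp.ne_zero⟩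
  set ζL : L := ⟨ζ, mem_adjoin_simple_self ℚ ζ⟩ with hzL
  have hcoe : (algebraMap L K) ζL = ζ := rfl
  have hζL : IsPrimitiveRoot ζL p :=
    IsPrimitiveRoot.of_map_of_injective (by rwa [hcoe]) (algebraMap L K).injective
  have hLpow : ζL ^ p = 1 := hζL.pow_eq_one
  have hmod : ∀ m : ℕ, ζL ^ (m % p) = ζL ^ m := by
    intro m
    conv_rhs => rw [← Nat.div_add_mod m p]
    rw [pow_add, pow_mul, hLpow, one_pow, one_mul]
  have hmulpow : ∀ a c : Multiplicative (ZMod p),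
      ζL ^ (Multiplicative.toAdd (a * c)).val
        = ζL ^ (Multiplicative.toAdd a).val * ζL ^ (Multiplicative.toAdd c).val := by
    intro a c
    show ζL ^ (Multiplicative.toAdd a + Multiplicative.toAdd c).val = _
    rw [ZMod.val_add, hmod, pow_add]
  let χ : Multiplicative (ZMod p) →* (ℚ × L) :=
    { toFun := fun g => (1, ζL ^ (Multiplicative.toAdd g).val)
      map_one' := by
        show ((1 : ℚ), ζL ^ (0 : ZMod p).val) = 1
        rw [ZMod.val_zero, pow_zero]
        rfl
      map_mul' := fun g h => by
        show ((1 : ℚ), ζL ^ (Multiplicative.toAdd (g * h)).val)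
          = (1, ζL ^ (Multiplicative.toAdd g).val) * (1, ζL ^ (Multiplicative.toAdd h).val)
        rw [Prod.mk_mul_mk, one_mul, hmulpow] }
  let φ : MonoidAlgebra ℚ (Multiplicative (ZMod p)) →ₐ[ℚ] (ℚ × L) :=
    MonoidAlgebra.lift ℚ (ℚ × L) (Multiplicative (ZMod p)) χ
  have hφs : ∀ (a : Multiplicative (ZMod p)) (c : ℚ),
      φ (MonoidAlgebra.single a c)
        = (c, algebraMap ℚ L c * ζL ^ (Multiplicative.toAdd a).val) := by
    intro a c
    rw [MonoidAlgebra.lift_single, Algebra.smul_def]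
    show (algebraMap ℚ ℚ c, algebraMap ℚ L c) * ((1 : ℚ), ζL ^ (Multiplicative.toAdd a).val) = _
    rw [Prod.mk_mul_mk, show algebraMap ℚ ℚ c = c from rfl, mul_one]
  -- surjectivity of φ
  set g₁ : Multiplicative (ZMod p) := Multiplicative.ofAdd (1 : ZMod p) with hg1
  have hval1 : (Multiplicative.toAdd g₁).val = 1 := by
    show (1 : ZMod p).val = 1
    exact ZMod.val_one p
  have hu : φ (MonoidAlgebra.single g₁ 1) = (1, ζL) := by
    rw [hφs, hval1, pow_one, map_one, one_mul]
  have hpne : (p : ℚ) ≠ 0 := Nat.cast_ne_zero.2 hp.ne_zero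
  have hroot : Polynomial.aeval ζL (cyclotomic p ℚ) = 0 := by
    rw [Polynomial.aeval_def, ← Polynomial.eval_map, map_cyclotomic]
    exact hζL.isRoot_cyclotomic hp.pos
  have haevalProd : ∀ (x : ℚ × L) (f : ℚ[X]),
      Polynomial.aeval x f = (Polynomial.aeval x.1 f, Polynomial.aeval x.2 f) := by
    intro x f
    exact Prod.ext (Polynomial.aeval_algHom_apply (AlgHom.fst ℚ ℚ L) x f).symm
      (Polynomial.aeval_algHom_apply (AlgHom.snd ℚ ℚ L) x f).symm
  have hp0 : ((p : ℚ), (0 : L)) ∈ φ.range := by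
    refine (AlgHom.mem_range φ).mpr
      ⟨Polynomial.aeval (R := ℚ) (A := MonoidAlgebra ℚ (Multiplicative (ZMod p)))
        (MonoidAlgebra.single g₁ (1:ℚ)) (cyclotomic p ℚ), ?_⟩
    rw [← Polynomial.aeval_algHom_apply, hu, haevalProd]
    refine Prod.ext ?_ ?_
    · show Polynomial.aeval (1 : ℚ) (cyclotomic p ℚ) = (p : ℚ)
      rw [Polynomial.coe_aeval_eq_eval]
      exact_mod_cast Polynomial.eval_one_cyclotomic_prime
    · exact hroot
  have h10 : ((1 : ℚ), (0 : L)) ∈ φ.range := by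
    have hmem := φ.range.mul_mem (φ.range.algebraMap_mem ((p : ℚ)⁻¹)) hp0
    have hid : algebraMap ℚ (ℚ × L) ((p:ℚ)⁻¹) * ((p : ℚ), (0:L)) = ((1:ℚ), (0:L)) := by
      rw [show algebraMap ℚ (ℚ × L) ((p:ℚ)⁻¹)
          = (((p:ℚ)⁻¹ : ℚ), algebraMap ℚ L ((p:ℚ)⁻¹)) from rfl, Prod.mk_mul_mk,
        mul_zero, inv_mul_cancel₀ hpne]
    rwa [hid] at hmem
  have h01 : ((0 : ℚ), (1 : L)) ∈ φ.range := by
    have hmem := φ.range.sub_mem φ.range.one_mem h10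
    rwa [show ((1 : ℚ × L)) - ((1:ℚ), (0:L)) = ((0:ℚ), (1:L)) by
      rw [show (1 : ℚ × L) = ((1:ℚ), (1:L)) from rfl, Prod.mk_sub_mk, sub_self, sub_zero]] at hmem
  have hsubalg : L.toSubalgebra = Algebra.adjoin ℚ {ζ} :=
    adjoin_simple_toSubalgebra_of_isAlgebraic hint.isAlgebraic
  have hbmem : ∀ b : L, b ∈ Algebra.adjoin ℚ {ζL} := by
    intro b
    have hb1 : (b : K) ∈ Algebra.adjoin ℚ {ζ} := by rw [← hsubalg]; exact b.2
    have hmapadj : (Algebra.adjoin ℚ {ζL}).map (IsScalarTower.toAlgHom ℚ L K)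
        = Algebra.adjoin ℚ {ζ} := by
      rw [AlgHom.map_adjoin, Set.image_singleton]
      congr 1
    rw [← hmapadj] at hb1
    obtain ⟨y, hy, hyb⟩ := Subalgebra.mem_map.mp hb1
    rwa [show y = b from Subtype.ext hyb] at hy
  have h0b : ∀ b : L, ((0 : ℚ), b) ∈ φ.range := by
    intro b
    refine Algebra.adjoin_induction ?_ ?_ ?_ ?_ (hbmem b)
    · intro x hx
      rw [Set.mem_singleton_iff] at hx
      subst hx
      have hmem := φ.range.mul_mem h01 ((AlgHom.mem_range φ).mpr ⟨MonoidAlgebra.single g₁ 1, hu⟩)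
      rwa [Prod.mk_mul_mk, zero_mul, one_mul] at hmem
    · intro r
      have hmem := φ.range.mul_mem (φ.range.algebraMap_mem r) h01
      rwa [show algebraMap ℚ (ℚ × L) r * ((0:ℚ), (1:L)) = ((0:ℚ), algebraMap ℚ L r) by
        rw [show algebraMap ℚ (ℚ × L) r = ((r : ℚ), algebraMap ℚ L r) from rfl,
          Prod.mk_mul_mk, mul_zero, mul_one]] at hmem
    · intro x y _ _ ihx ihy
      have hmem := φ.range.add_mem ihx ihy
      rwa [Prod.mk_add_mk, add_zero] at hmem
    · intro x y _ _ ihx ihy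
      have hmem := φ.range.mul_mem ihx ihy
      rwa [Prod.mk_mul_mk, mul_zero] at hmem
  have hφsurj : Function.Surjective φ := by
    rintro ⟨a, b⟩
    have hmem := φ.range.add_mem
      (φ.range.mul_mem (φ.range.algebraMap_mem a) h10) (h0b b)
    rwa [show algebraMap ℚ (ℚ × L) a * ((1:ℚ), (0:L)) + ((0:ℚ), b) = ((a : ℚ), b) by
      rw [show algebraMap ℚ (ℚ × L) a = ((a : ℚ), algebraMap ℚ L a) from rfl,
        Prod.mk_mul_mk, mul_one, mul_zero, Prod.mk_add_mk, add_zero, zero_add],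
      AlgHom.mem_range] at hmem
  -- injectivity of φ via polynomials
  set P : MonoidAlgebra ℚ (Multiplicative (ZMod p)) → ℚ[X] :=
    fun r => r.coeff.sum (fun g c => Polynomial.C c * Polynomial.X ^ (Multiplicative.toAdd g).val)
    with hP
  have hterm0 : ∀ g : Multiplicative (ZMod p),
      Polynomial.C (0:ℚ) * Polynomial.X ^ (Multiplicative.toAdd g).val = 0 := by
    intro g; rw [map_zero, zero_mul]
  have hcoeAM : ∀ c : ℚ, ((algebraMap ℚ L c : L) : K) = algebraMap ℚ K c := fun c => rfl
  have hA : ∀ r, (φ r).1 = (P r).eval 1 ∧ ((φ r).2 : K) = Polynomial.aeval ζ (P r)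
      ∧ (P r).natDegree ≤ p - 1 := by
    intro r
    refine MonoidAlgebra.induction r ?_ ?_
    · refine ⟨?_, ?_, ?_⟩
      · rw [map_zero]
        show (0:ℚ) = (P 0).eval 1
        simp only [hP, MonoidAlgebra.coeff_zero]
        rw [Finsupp.sum_zero_index, Polynomial.eval_zero]
      · rw [map_zero]
        show ((0 : L) : K) = _
        simp only [hP, MonoidAlgebra.coeff_zero]
        rw [Finsupp.sum_zero_index, map_zero, ZeroMemClass.coe_zero]
      · simp only [hP, MonoidAlgebra.coeff_zero]
        rw [Finsupp.sum_zero_index]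
        simp
    · intro a c f hafnot hc ih
      have hPadd : P (MonoidAlgebra.single a c + f)
          = Polynomial.C c * Polynomial.X ^ (Multiplicative.toAdd a).val + P f := by
        simp only [hP, MonoidAlgebra.coeff_add, MonoidAlgebra.coeff_single]
        rw [Finsupp.sum_add_index' hterm0 (fun g b1 b2 => by rw [map_add, add_mul])]
        rw [Finsupp.sum_single_index (hterm0 a)]
      refine ⟨?_, ?_, ?_⟩
      · rw [map_add, hφs, hPadd]
        show c + (φ f).1 = _
        rw [Polynomial.eval_add, ← ih.1, Polynomial.eval_mul, Polynomial.eval_pow,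
          Polynomial.eval_C, Polynomial.eval_X, one_pow, mul_one]
      · rw [map_add, hφs, hPadd]
        show ((algebraMap ℚ L c * ζL ^ (Multiplicative.toAdd a).val + (φ f).2 : L) : K) = _
        push_cast
        rw [ih.2.1, map_add, map_mul, Polynomial.aeval_C, map_pow, Polynomial.aeval_X]
      · rw [hPadd]
        refine le_trans (Polynomial.natDegree_add_le _ _) (max_le ?_ ih.2.2)
        refine le_trans (Polynomial.natDegree_mul_le) ?_
        rw [Polynomial.natDegree_C, Polynomial.natDegree_X_pow]
        have := (Multiplicative.toAdd a).val_lt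
        omega
  have hcf : ∀ (r : MonoidAlgebra ℚ (Multiplicative (ZMod p))) (g : Multiplicative (ZMod p)),
      (P r).coeff (Multiplicative.toAdd g).val = r.coeff g := by
    intro r g
    simp only [hP]
    rw [Finsupp.sum, Polynomial.finset_sum_coeff]
    by_cases hg : g ∈ r.coeff.support
    · rw [Finset.sum_eq_single g]
      · rw [Polynomial.coeff_C_mul, Polynomial.coeff_X_pow, if_pos rfl, mul_one]
      · intro h _ hne
        rw [Polynomial.coeff_C_mul, Polynomial.coeff_X_pow, if_neg, mul_zero]
        intro hvv
        exact hne (Multiplicative.toAdd.injective (ZMod.val_injective p hvv)).symm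
      · intro hgn
        exact absurd hg hgn
    · rw [Finsupp.notMem_support_iff.mp hg, Finset.sum_eq_zero]
      intro h hh
      rw [Polynomial.coeff_C_mul, Polynomial.coeff_X_pow, if_neg, mul_zero]
      intro hvv
      refine hg ?_
      rw [show g = h from Multiplicative.toAdd.injective (ZMod.val_injective p hvv)]
      exact hh
  have hφinj : Function.Injective φ := by
    have h0 : ∀ r, φ r = 0 → r = 0 := by
      intro r hr
      have hA1 := (hA r).1
      have hA2 := (hA r).2.1
      have hdeg := (hA r).2.2
      rw [hr] at hA1 hA2
      have hev1 : (P r).eval 1 = 0 := by rw [← hA1]; rfl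
      have hev2 : Polynomial.aeval ζ (P r) = 0 := by
        rw [← hA2]
        show ((0 : L) : K) = 0
        exact ZeroMemClass.coe_zero _
      have hPz : P r = 0 := by
        by_contra hPz
        have hdvd : cyclotomic p ℚ ∣ P r := by
          rw [hminpoly]
          exact minpoly.dvd ℚ ζ hev2
        obtain ⟨qq, hqq⟩ := hdvd
        have hqq0 : qq ≠ 0 := by
          rintro rfl
          rw [mul_zero] at hqq
          exact hPz hqq
        have hcy0 : cyclotomic p ℚ ≠ 0 := cyclotomic_ne_zero p ℚ
        have hdeg2 : (P r).natDegree = (p - 1) + qq.natDegree := by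
          rw [hqq, Polynomial.natDegree_mul hcy0 hqq0, natDegree_cyclotomic,
            Nat.totient_prime hp]
        have hq0 : qq.natDegree = 0 := by omega
        have hqqC := Polynomial.eq_C_of_natDegree_eq_zero hq0
        have hcne : qq.coeff 0 ≠ 0 := by
          intro h
          rw [h, map_zero] at hqqC
          exact hqq0 hqqC
        have heval : (P r).eval 1 = p * qq.coeff 0 := by
          rw [hqq, hqqC, Polynomial.eval_mul, Polynomial.eval_C]
          have : (cyclotomic p ℚ).eval 1 = (p : ℚ) := by
            exact_mod_cast Polynomial.eval_one_cyclotomic_prime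
          rw [this, Polynomial.coeff_C_zero]
        rw [hev1] at heval
        exact hcne (by
          rcases mul_eq_zero.mp heval.symm with h | h
          · exact absurd h hpne
          · exact h)
      refine MonoidAlgebra.coeff_injective (Finsupp.ext fun g => ?_)
      rw [← hcf r g, hPz, Polynomial.coeff_zero]
      rfl
    intro x y hxy
    have := h0 (x - y) (by rw [map_sub, hxy, sub_self])
    exact sub_eq_zero.mp this
  let φe : MonoidAlgebra ℚ (Multiplicative (ZMod p)) ≃ₐ[ℚ] (ℚ × L) :=
    AlgEquiv.ofBijective φ ⟨hφinj, hφsurj⟩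
  let ψ : (ℚ × L) ≃ₗ[ℚ] MonoidAlgebra ℚ (Multiplicative (ZMod p)) := φe.symm.toLinearEquiv
  have happ : ∀ y : ℚ × L, φ (ψ y) = y := fun y => φe.apply_symm_apply y
  -- key intertwining identity
  have hkey : ∀ (g : Multiplicative (ZMod p)) (r : MonoidAlgebra ℚ (Multiplicative (ZMod p))),
      φ (Representation.ofMulAction ℚ (Multiplicative (ZMod p)) (Multiplicative (ZMod p)) g r)
        = ((φ r).1, ζL ^ (Multiplicative.toAdd g).val * (φ r).2) := by
    intro g r
    refine MonoidAlgebra.induction r ?_ ?_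
    · rw [map_zero, map_zero]
      refine Prod.ext rfl ?_
      show (0 : L) = ζL ^ (Multiplicative.toAdd g).val * 0
      rw [mul_zero]
    · intro a c f _ _ ih
      rw [map_add, map_add, map_add, hφs,
        show Representation.ofMulAction ℚ (Multiplicative (ZMod p)) (Multiplicative (ZMod p)) g
            (MonoidAlgebra.single a c) = MonoidAlgebra.single (g * a) c from
          Representation.ofMulAction_single g a c, hφs, ih]
      refine Prod.ext rfl ?_
      show algebraMap ℚ L c * ζL ^ (Multiplicative.toAdd (g * a)).val
            + ζL ^ (Multiplicative.toAdd g).val * (φ f).2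
          = ζL ^ (Multiplicative.toAdd g).val
            * (algebraMap ℚ L c * ζL ^ (Multiplicative.toAdd a).val + (φ f).2)
      rw [hmulpow]
      ring
  -- basis of K over L
  have hFDL : FiniteDimensional L K := FiniteDimensional.right ℚ L K
  let b : Module.Basis (Fin n) L K := Module.finBasisOfFinrankEq L K hfrLK
  let eK : K ≃ₗ[L] (Fin n → L) := b.equivFun
  have heKs : ∀ (z : L) (x : K) (i : Fin n), eK (z • x) i = z * eK x i := by
    intro z x i
    rw [map_smul]
    rfl
  have hsmulK : ∀ (z : L) (x : K), z • x = (z : K) * x := fun z x => by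
    rw [Algebra.smul_def]
    rfl
  -- assembling the equivalence
  let e1 : (K × (Fin n → ℚ)) ≃ₗ[ℚ] ((Fin n → L) × (Fin n → ℚ)) :=
    (eK.restrictScalars ℚ).prodCongr (LinearEquiv.refl ℚ _)
  let e2 : ((Fin n → L) × (Fin n → ℚ)) ≃ₗ[ℚ] (Fin n → ℚ × L) :=
    { toFun := fun x i => (x.2 i, x.1 i)
      invFun := fun F => (fun i => (F i).2, fun i => (F i).1)
      map_add' := fun _ _ => rfl
      map_smul' := fun _ _ => rfl
      left_inv := fun _ => rfl
      right_inv := fun _ => rfl }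
  let e3 : (Fin n → ℚ × L) ≃ₗ[ℚ] (Fin n → (Multiplicative (ZMod p) →₀ ℚ)) :=
    LinearEquiv.piCongrRight (fun _ => ψ.trans (MonoidAlgebra.coeffLinearEquiv ℚ))
  refine ⟨(e1.trans e2).trans e3, ?_⟩
  intro g v
  have heval : ∀ (x : K) (w : Fin n → ℚ) (i : Fin n),
      ((e1.trans e2).trans e3) (x, w) i = MonoidAlgebra.coeffLinearEquiv ℚ (ψ (w i, eK x i)) :=
      fun _ _ _ => rfl
  obtain ⟨x, w⟩ := v
  funext i
  show ((e1.trans e2).trans e3) (ζ ^ (Multiplicative.toAdd g).val * x, w) i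
      = MonoidAlgebra.coeffLinearEquiv ℚ (Representation.ofMulAction ℚ (Multiplicative (ZMod p))
        (Multiplicative (ZMod p)) g ((MonoidAlgebra.coeffLinearEquiv ℚ).symm
        (((e1.trans e2).trans e3) (x, w) i)))
  rw [heval, heval, LinearEquiv.symm_apply_apply]
  congr 1
  have h1 : eK (ζ ^ (Multiplicative.toAdd g).val * x) i
      = ζL ^ (Multiplicative.toAdd g).val * eK x i := by
    have hx : ζ ^ (Multiplicative.toAdd g).val * x
        = (ζL ^ (Multiplicative.toAdd g).val) • x := by
      rw [hsmulK]
      congr 1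
    rw [hx, heKs]
  rw [h1]
  apply φe.injective
  rw [show φe (ψ (w i, ζL ^ (Multiplicative.toAdd g).val * eK x i))
      = (w i, ζL ^ (Multiplicative.toAdd g).val * eK x i) from φe.apply_symm_apply _]
  have h2 := hkey g (ψ (w i, eK x i))
  rw [happ] at h2
  rw [← h2]
  rfl
end

section
/- Let p be a prime and G a finite cyclic p-group. Then the module K(G, C_p) of relative Brauer relations is zero: if a ℤ-linear combination of right-C_p-free (G, C_p)-bisets maps to zero in the rational representation ring of G × C_p under X ↦ ℚ[X], then the combination is zero in B(G, C_p). -/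
/-- The graph subgroup of `G × C_p` associated to a pair `(K, ρ)` of a subgroup
`K ≤ G` and a homomorphism `ρ : K → C_p`; these index the basis of `B(G, C_p)`. -/
def graphSubgroup (p : ℕ) (G : Type*) [CommGroup G]
    (pair : Σ K : Subgroup G, (↥K →* Multiplicative (ZMod p))) :
    Subgroup (G × Multiplicative (ZMod p)) :=
  (pair.1.subtype.prod pair.2).range

/-- The map `f_{G,C_p} : B(G,C_p) → R_ℚ(G × C_p)`, encoded via characters: each basis
element (a transitive right-`C_p`-free biset, i.e. the graph of some `ρ : K → C_p`) is
sent to the character of the permutation representation `ℚ[(G × C_p)/graph]`, whose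
value at `g` is the number of fixed points of `g`. -/
noncomputable def relativeLinearization (p : ℕ) (G : Type*) [CommGroup G] :
    ((Σ K : Subgroup G, (↥K →* Multiplicative (ZMod p))) →₀ ℤ) →ₗ[ℤ]
      ((G × Multiplicative (ZMod p)) → ℚ) :=
  Finsupp.lsum ℤ fun pair => LinearMap.toSpanSingleton ℤ _
    (fun g => (Nat.card
      {x : (G × Multiplicative (ZMod p)) ⧸ graphSubgroup p G pair // g • x = x} : ℚ))



open scoped Classical

section Aux
variable {Γ : Type*} [CommGroup Γ] [Finite Γ]

lemma fixed_card (H : Subgroup Γ) (g : Γ) :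
    (Nat.card {x : Γ ⧸ H // g • x = x} : ℚ) =
      if g ∈ H then (Nat.card (Γ ⧸ H) : ℚ) else 0 := by
  classical
  have key : ∀ x : Γ ⧸ H, g • x = x ↔ g ∈ H := by
    intro x
    induction x using QuotientGroup.induction_on with
    | H γ =>
      rw [MulAction.Quotient.smul_mk, QuotientGroup.eq]
      constructor
      · intro h
        have : (g • γ)⁻¹ * γ = g⁻¹ := by
          simp [smul_eq_mul, mul_comm, mul_assoc]
        rw [this] at h
        simpa using H.inv_mem h
      · intro h
        have : (g • γ)⁻¹ * γ = g⁻¹ := by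
          simp [smul_eq_mul, mul_comm, mul_assoc]
        rw [this]
        exact H.inv_mem h
  by_cases hg : g ∈ H
  · rw [if_pos hg]
    congr 1
    exact Nat.card_congr (Equiv.subtypeUnivEquiv fun x => (key x).mpr hg)
  · rw [if_neg hg]
    have : IsEmpty {x : Γ ⧸ H // g • x = x} :=
      ⟨fun ⟨x, hx⟩ => hg ((key x).mp hx)⟩
    simp [Nat.card_of_isEmpty]

end Aux

lemma mem_graphSubgroup {p : ℕ} {G : Type*} [CommGroup G]
    (pair : Σ K : Subgroup G, (↥K →* Multiplicative (ZMod p)))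
    (x : G × Multiplicative (ZMod p)) :
    x ∈ graphSubgroup p G pair ↔ ∃ k : ↥pair.1, ((k : G), pair.2 k) = x := by
  simp [graphSubgroup, MonoidHom.mem_range, MonoidHom.prod_apply]

lemma graph_injective (p : ℕ) (G : Type*) [CommGroup G] :
    Function.Injective (graphSubgroup p G) := by
  rintro ⟨K, ρ⟩ ⟨K', ρ'⟩ h
  obtain rfl : K = K' := by
    ext g
    constructor
    · intro hg
      have : ((((⟨g, hg⟩ : ↥K) : G)), ρ ⟨g, hg⟩) ∈ graphSubgroup p G ⟨K', ρ'⟩ := by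
        rw [← h, mem_graphSubgroup]; exact ⟨⟨g, hg⟩, rfl⟩
      obtain ⟨k', hk'⟩ := (mem_graphSubgroup _ _).mp this
      have h1 : (k' : G) = g := by simpa using congrArg Prod.fst hk'
      exact h1 ▸ k'.2
    · intro hg
      have : ((((⟨g, hg⟩ : ↥K') : G)), ρ' ⟨g, hg⟩) ∈ graphSubgroup p G ⟨K, ρ⟩ := by
        rw [h, mem_graphSubgroup]; exact ⟨⟨g, hg⟩, rfl⟩
      obtain ⟨k, hk⟩ := (mem_graphSubgroup _ _).mp this
      have h1 : (k : G) = g := by simpa using congrArg Prod.fst hk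
      exact h1 ▸ k.2
  have : ρ = ρ' := by
    ext k
    have : (((k : G)), ρ k) ∈ graphSubgroup p G ⟨K, ρ'⟩ := by
      rw [← h, mem_graphSubgroup]; exact ⟨k, rfl⟩
    obtain ⟨k', hk'⟩ := (mem_graphSubgroup _ _).mp this
    have h1 : (k' : G) = (k : G) := congrArg Prod.fst hk'
    have h2 : ρ' k' = ρ k := congrArg Prod.snd hk'
    rw [Subtype.ext h1] at h2
    exact h2.symm
  rw [this]

lemma graph_isCyclic {p : ℕ} {G : Type*} [CommGroup G] [IsCyclic G]
    (pair : Σ K : Subgroup G, (↥K →* Multiplicative (ZMod p))) :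
    IsCyclic ↥(graphSubgroup p G pair) :=
  isCyclic_of_surjective (pair.1.subtype.prod pair.2).rangeRestrict
    (pair.1.subtype.prod pair.2).rangeRestrict_surjective

/-- For `G` a finite cyclic `p`-group, the module `K(G, C_p)` of relative Brauer
relations is zero: the map `f_{G,C_p}` is injective. -/
theorem relative_brauer_relations_of_cyclic_eq_zero (p : ℕ) [Fact p.Prime]
    (G : Type*) [CommGroup G] [IsCyclic G] [Finite G] (hG : IsPGroup p G) :
    LinearMap.ker (relativeLinearization p G) = ⊥ := by
  rw [LinearMap.ker_eq_bot']
  intro f hf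
  classical
  by_contra hne
  haveI : NeZero p := ⟨(Fact.out : p.Prime).ne_zero⟩
  set Γ := G × Multiplicative (ZMod p)
  have hsupp : f.support.Nonempty := Finsupp.support_nonempty_iff.mpr hne
  -- pick a maximal graph subgroup in the support
  obtain ⟨H₀, hH₀mem, hH₀max⟩ :=
    (by
      obtain ⟨H, hH, hmax⟩ := Finset.exists_maximal (s := f.support.image (graphSubgroup p G))
        (hsupp.image _)
      exact ⟨H, hH, fun x hx hlt => hlt.not_ge (hmax hx hlt.le)⟩ :
      ∃ H ∈ f.support.image (graphSubgroup p G), ∀ x ∈ f.support.image (graphSubgroup p G),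
        ¬ H < x)
  obtain ⟨pair₀, hp₀supp, hp₀⟩ := Finset.mem_image.mp hH₀mem
  -- generator of H₀
  haveI : IsCyclic ↥(graphSubgroup p G pair₀) := graph_isCyclic pair₀
  obtain ⟨g₀, hg₀⟩ := IsCyclic.exists_generator (α := ↥(graphSubgroup p G pair₀))
  set x₀ : Γ := (g₀ : Γ) with hx₀
  have hx₀mem : x₀ ∈ graphSubgroup p G pair₀ := g₀.2
  have hle : ∀ H : Subgroup Γ, x₀ ∈ H → graphSubgroup p G pair₀ ≤ H := by
    intro H hx y hy
    obtain ⟨n, hn⟩ := Subgroup.mem_zpowers_iff.mp (hg₀ ⟨y, hy⟩)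
    have hyy : (g₀ : Γ) ^ n = y := by
      have := congrArg Subtype.val hn
      simpa using this
    rw [← hyy]
    exact H.zpow_mem hx n
  -- evaluate the relation at x₀
  have heval := congrFun hf x₀
  rw [relativeLinearization, Finsupp.lsum_apply] at heval
  have heval2 : ∑ pair ∈ f.support,
      (f pair : ℚ) * (Nat.card {x : Γ ⧸ graphSubgroup p G pair // x₀ • x = x} : ℚ) = 0 := by
    rw [Finsupp.sum, Finset.sum_apply] at heval
    simp only [Pi.zero_apply] at heval
    rw [← heval]
    apply Finset.sum_congr rfl
    intro pair _
    rw [LinearMap.toSpanSingleton_apply, Pi.smul_apply, zsmul_eq_mul]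
  rw [Finset.sum_eq_single pair₀] at heval2
  · rw [fixed_card, if_pos hx₀mem] at heval2
    have hcard : (Nat.card (Γ ⧸ graphSubgroup p G pair₀) : ℚ) ≠ 0 := by
      exact_mod_cast Nat.card_pos.ne'
    have hfp : f pair₀ ≠ 0 := Finsupp.mem_support_iff.mp hp₀supp
    exact (Int.cast_ne_zero.mpr hfp) ((mul_eq_zero.mp heval2).resolve_right hcard)
  · intro pair hpair hne'
    have hnot : x₀ ∉ graphSubgroup p G pair := by
      intro hx₀in
      have h1 : graphSubgroup p G pair₀ ≤ graphSubgroup p G pair := hle _ hx₀in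
      have h2 : graphSubgroup p G pair ∈ f.support.image (graphSubgroup p G) :=
        Finset.mem_image_of_mem _ hpair
      have h3 : graphSubgroup p G pair = graphSubgroup p G pair₀ := by
        by_contra hne''
        have h1' : H₀ ≤ graphSubgroup p G pair := hp₀ ▸ h1
        have hneq : H₀ ≠ graphSubgroup p G pair := fun he => hne'' (by rw [← he, ← hp₀])
        exact hH₀max _ h2 (lt_of_le_of_ne h1' hneq)
      exact hne' (graph_injective p G h3)
    rw [fixed_card, if_neg hnot, mul_zero]
  · intro h
    exact absurd hp₀supp h
end
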